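/- Let Φ be a quantum channel on M_d(ℂ) (completely positive, trace preserving). If every Φ_i is a quantum channel with |det Φ_i| = 1 for i = 1,…,n, then each Φ_i is a unitary conjugation, hence the composition Φ₁∘⋯∘Φₙ is a unitary conjugation and is not entanglement annihilating for any n. -/

import Mathlib

open Matrix
open scoped ComplexOrder Kronecker

/-- The Choi matrix of a linear map on matrices indexed by a finite type. -/
noncomputable def choiMatrix {ι : Type*} [Fintype ι] [DecidableEq ι]
    (Φ : Module.End ℂ (Matrix ι ι ℂ)) : Matrix (ι × ι) (ι × ι) ℂ :=
  fun p q => Φ (Matrix.single p.2 q.2 1) p.1 q.1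

/-- A state on a bipartite system is separable if it is a convex combination of
tensor products of positive semidefinite matrices. -/
def IsSepState {a b : ℕ} (ρ : Matrix (Fin a × Fin b) (Fin a × Fin b) ℂ) : Prop :=
  ∃ (n : ℕ) (c : Fin n → ℝ) (A : Fin n → Matrix (Fin a) (Fin a) ℂ)
    (B : Fin n → Matrix (Fin b) (Fin b) ℂ),
    (∀ i, 0 ≤ c i) ∧ (∀ i, (A i).PosSemidef) ∧ (∀ i, (B i).PosSemidef) ∧
      ρ = ∑ i, (c i : ℂ) • (A i ⊗ₖ B i)

/-- A channel on a bipartite system is entanglement annihilating if every state is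
mapped to a separable state. -/
def IsEA {a b : ℕ} (Φ : Module.End ℂ (Matrix (Fin a × Fin b) (Fin a × Fin b) ℂ)) : Prop :=
  ∀ ρ : Matrix (Fin a × Fin b) (Fin a × Fin b) ℂ,
    ρ.PosSemidef → Matrix.trace ρ = 1 → IsSepState (Φ ρ)

/-!
Let `Φ` act on `d × d` matrices, let `M` be its matrix in the basis of matrix units and `C` its
Choi matrix. The entries of `C` are those of `M` rearranged, so `tr (Cᴴ C) = tr (Mᴴ M)`, and
AM-GM on the eigenvalues of `Mᴴ M`, whose product is `|det Φ|² = 1`, gives `tr (Mᴴ M) ≥ d²`.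
Trace preservation gives `tr C = d`, so `(tr C)² ≤ tr (C²)`; for a positive semidefinite `C`
this forces `C = w wᴴ`, i.e. `Φ X = K X Kᴴ`, and trace preservation once more makes `K` unitary.
A unitary conjugation maps the state `Uᴴ σ U` to the Bell state `σ`, which is entangled because
its partial transpose is not positive.
-/

theorem Real.card_le_sum_of_prod_eq_one {κ : Type*} [Fintype κ] {ν : κ → ℝ}
    (hν : ∀ i, 0 ≤ ν i) (hprod : ∏ i, ν i = 1) : (Fintype.card κ : ℝ) ≤ ∑ i, ν i := by
  rcases isEmpty_or_nonempty κ with hκ | hκ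
  · simp
  have hcard : (0 : ℝ) < Fintype.card κ := by exact_mod_cast Fintype.card_pos
  have amgm := Real.geom_mean_le_arith_mean Finset.univ (fun _ => 1) ν (fun _ _ => zero_le_one)
    (by simpa using hcard) (fun i _ => hν i)
  simp only [Real.rpow_one, hprod, Real.one_rpow, one_mul, Finset.sum_const, Finset.card_univ,
    nsmul_eq_mul, mul_one] at amgm
  rwa [le_div_iff₀ hcard, one_mul] at amgm

theorem Real.support_subsingleton_of_sq_sum_le_sum_sq {κ : Type*} [Fintype κ] {μ : κ → ℝ}
    (hμ : ∀ i, 0 ≤ μ i) (h : (∑ i, μ i) ^ 2 ≤ ∑ i, μ i ^ 2) :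
    (Function.support μ).Subsingleton := by
  classical
  have hle : ∀ i, μ i ≤ ∑ k, μ k :=
    fun i => Finset.single_le_sum (fun k _ => hμ k) (Finset.mem_univ i)
  -- the terms `μ i * (∑ μ - μ i) ≥ 0` add up to `(∑ μ) ^ 2 - ∑ μ ^ 2 ≤ 0`
  have hmass : ∀ i, μ i ≠ 0 → μ i = ∑ k, μ k := by
    have hnonneg : ∀ i ∈ Finset.univ, 0 ≤ μ i * (∑ k, μ k - μ i) :=
      fun i _ => mul_nonneg (hμ i) (sub_nonneg.mpr (hle i))
    have hsum : ∑ i, μ i * (∑ k, μ k - μ i) = (∑ k, μ k) ^ 2 - ∑ i, μ i ^ 2 := by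
      simp only [mul_sub, Finset.sum_sub_distrib, ← Finset.sum_mul, sq]
    have hzero := (Finset.sum_eq_zero_iff_of_nonneg hnonneg).mp
      (le_antisymm (hsum ▸ sub_nonpos.mpr h) (Finset.sum_nonneg hnonneg))
    intro i hi
    linarith [(mul_eq_zero.mp (hzero i (Finset.mem_univ i))).resolve_left hi]
  intro i hi j hj
  by_contra hij
  have hpair : μ i + μ j ≤ ∑ k, μ k := by
    rw [← Finset.sum_pair hij]
    exact Finset.sum_le_sum_of_subset_of_nonneg (Finset.subset_univ _) (fun k _ _ => hμ k)
  have hi' := hmass i hi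
  have hj' := hmass j hj
  exact hi (by linarith [hμ i])

theorem Matrix.conjTranspose_mul_self_eq_one_of_forall_trace_eq {R n : Type*} [CommSemiring R]
    [Star R] [Fintype n] [DecidableEq n] {K : Matrix n n R}
    (h : ∀ X, (K * X * Kᴴ).trace = X.trace) : Kᴴ * K = 1 :=
  ext_iff_trace_mul_right.mpr fun X => by rw [one_mul, ← h X, mul_assoc, trace_mul_comm]

section Spectral
variable {𝕜 : Type*} [RCLike 𝕜] {n : Type*} [Fintype n] [DecidableEq n]

theorem Matrix.card_le_re_trace_conjTranspose_mul_self {M : Matrix n n 𝕜} (h : ‖M.det‖ = 1) :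
    (Fintype.card n : ℝ) ≤ RCLike.re (Mᴴ * M).trace := by
  have hN := posSemidef_conjTranspose_mul_self M
  have hdet : (Mᴴ * M).det = 1 := by
    rw [det_mul, det_conjTranspose, RCLike.star_def, RCLike.conj_mul, h]
    simp
  rw [hN.1.det_eq_prod_eigenvalues] at hdet
  rw [hN.1.trace_eq_sum_eigenvalues, ← RCLike.ofReal_sum, RCLike.ofReal_re]
  exact Real.card_le_sum_of_prod_eq_one hN.eigenvalues_nonneg (by exact_mod_cast hdet)

theorem Matrix.IsHermitian.trace_mul_self {A : Matrix n n 𝕜} (hA : A.IsHermitian) :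
    (A * A).trace = ∑ i, (hA.eigenvalues i : 𝕜) ^ 2 := by
  conv_lhs => rw [hA.spectral_theorem, ← map_mul, Unitary.conjStarAlgAut_apply, trace_mul_cycle,
    Unitary.coe_star_mul_self, one_mul, diagonal_mul_diagonal, trace_diagonal]
  simp [sq]

theorem Matrix.PosSemidef.exists_eq_vecMulVec_of_sq_trace_le {C : Matrix n n 𝕜}
    (hC : C.PosSemidef) (h : RCLike.re C.trace ^ 2 ≤ RCLike.re (C * C).trace) :
    ∃ w : n → 𝕜, C = vecMulVec w (star w) := by
  set μ := hC.1.eigenvalues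
  have hsupp : (Function.support μ).Subsingleton := by
    refine Real.support_subsingleton_of_sq_sum_le_sum_sq hC.eigenvalues_nonneg ?_
    rw [hC.1.trace_mul_self, hC.1.trace_eq_sum_eigenvalues] at h
    simpa only [← RCLike.ofReal_pow, ← RCLike.ofReal_sum, RCLike.ofReal_re] using h
  rcases (Function.support μ).eq_empty_or_nonempty with hzero | ⟨j, hj⟩
  · refine ⟨0, ?_⟩
    rw [zero_vecMulVec, ← hC.1.eigenvalues_eq_zero_iff]
    exact Function.support_eq_empty_iff.mp hzero
  set U : Matrix n n 𝕜 := (hC.1.eigenvectorUnitary : Matrix n n 𝕜)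
  set x : n → 𝕜 := Pi.single j (Real.sqrt (μ j) : 𝕜)
  have hμ : ∀ i ≠ j, μ i = 0 := fun i hi => Function.notMem_support.mp fun h' => hi (hsupp h' hj)
  have hD : diagonal (RCLike.ofReal ∘ μ) = vecMulVec x (star x) := by
    ext p q
    rcases eq_or_ne p q with rfl | hpq
    · rcases eq_or_ne p j with rfl | hpj
      · simp only [x, diagonal_apply_eq, Function.comp_apply, vecMulVec_apply, Pi.star_apply,
          Pi.single_eq_same, RCLike.star_def, RCLike.conj_ofReal]
        rw [← RCLike.ofReal_mul, Real.mul_self_sqrt (hC.eigenvalues_nonneg p)]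
      · simp [x, vecMulVec_apply, hpj, hμ p hpj]
    · rcases eq_or_ne p j with rfl | hpj
      · simp [x, vecMulVec_apply, hpq, hpq.symm]
      · simp [x, vecMulVec_apply, hpq, hpj]
  refine ⟨U *ᵥ x, ?_⟩
  conv_lhs => rw [hC.1.spectral_theorem, Unitary.conjStarAlgAut_apply, hD]
  rw [mul_vecMulVec, vecMulVec_mul, star_mulVec]
  rfl

end Spectral

section Choi
variable {ι : Type*} [Fintype ι] [DecidableEq ι]

theorem choiMatrix_injective : Function.Injective (choiMatrix (ι := ι)) := by
  intro Φ Ψ h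
  refine (stdBasis ℂ ι ι).ext fun ⟨k, l⟩ => ?_
  ext i j
  rw [stdBasis_eq_single]
  exact congr_fun₂ h (i, k) (j, l)

theorem choiMatrix_mulLeftRight (K : Matrix ι ι ℂ) :
    choiMatrix (LinearMap.mulLeftRight ℂ (K, Kᴴ)) =
      vecMulVec (fun p => K p.1 p.2) (star fun p => K p.1 p.2) := by
  ext ⟨i, k⟩ ⟨j, l⟩
  rw [choiMatrix, LinearMap.mulLeftRight_apply, single_eq_single_vecMulVec_single, mul_vecMulVec,
    vecMulVec_mul, vecMulVec_apply, vecMulVec_apply, mulVec_single_one]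
  simp [vecMul, dotProduct, Pi.single_apply]

theorem LinearMap.toMatrix_stdBasis_apply (Φ : Module.End ℂ (Matrix ι ι ℂ)) (i j k l : ι) :
    LinearMap.toMatrix (stdBasis ℂ ι ι) (stdBasis ℂ ι ι) Φ (i, j) (k, l) =
      Φ (Matrix.single k l 1) i j := by
  rw [LinearMap.toMatrix_apply, stdBasis_eq_single]
  simp [stdBasis]

theorem trace_conjTranspose_mul_self_choiMatrix (Φ : Module.End ℂ (Matrix ι ι ℂ)) :
    ((choiMatrix Φ)ᴴ * choiMatrix Φ).trace =
      ((LinearMap.toMatrix (stdBasis ℂ ι ι) (stdBasis ℂ ι ι) Φ)ᴴ *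
        LinearMap.toMatrix (stdBasis ℂ ι ι) (stdBasis ℂ ι ι) Φ).trace := by
  simp only [← star_vec_dotProduct_vec, dotProduct]
  let swap : (ι × ι) × ι × ι → (ι × ι) × ι × ι := fun ⟨⟨j, l⟩, i, k⟩ => ⟨⟨k, l⟩, i, j⟩
  refine Fintype.sum_bijective swap (Function.Involutive.bijective fun _ => rfl) _ _ ?_
  rintro ⟨⟨j, l⟩, i, k⟩
  simp only [swap, Pi.star_apply, vec, LinearMap.toMatrix_stdBasis_apply]
  rfl

theorem trace_choiMatrix {Φ : Module.End ℂ (Matrix ι ι ℂ)}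
    (htp : ∀ X, (Φ X).trace = X.trace) : (choiMatrix Φ).trace = Fintype.card ι := by
  calc (choiMatrix Φ).trace = ∑ k, (Φ (single k k 1)).trace := by
        simp only [trace, diag, choiMatrix, Fintype.sum_prod_type]
        exact Finset.sum_comm
    _ = Fintype.card ι := by simp [htp]

end Choi

def Matrix.partialTranspose {m n R : Type*} (ρ : Matrix (m × n) (m × n) R) :
    Matrix (m × n) (m × n) R :=
  of fun p q => ρ (q.1, p.2) (p.1, q.2)

theorem IsSepState.posSemidef_partialTranspose {a b : ℕ}
    {ρ : Matrix (Fin a × Fin b) (Fin a × Fin b) ℂ} (hρ : IsSepState ρ) :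
    ρ.partialTranspose.PosSemidef := by
  obtain ⟨n, c, A, B, hc, hA, hB, rfl⟩ := hρ
  have hsum : partialTranspose (∑ i, (c i : ℂ) • (A i ⊗ₖ B i)) =
      ∑ i, (c i : ℂ) • ((A i)ᵀ ⊗ₖ B i) := by
    ext p q
    simp [partialTranspose, Matrix.sum_apply]
  rw [hsum]
  exact posSemidef_sum _ fun i _ =>
    ((hA i).transpose.kronecker (hB i)).smul (Complex.zero_le_real.mpr (hc i))

theorem exists_not_isSepState {a b : ℕ} (ha : 2 ≤ a) (hb : 2 ≤ b) :
    ∃ σ : Matrix (Fin a × Fin b) (Fin a × Fin b) ℂ,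
      σ.PosSemidef ∧ σ.trace = 1 ∧ ¬ IsSepState σ := by
  let i₀ : Fin a := ⟨0, by omega⟩
  let i₁ : Fin a := ⟨1, by omega⟩
  let j₀ : Fin b := ⟨0, by omega⟩
  let j₁ : Fin b := ⟨1, by omega⟩
  have hi : i₀ ≠ i₁ := by simp [i₀, i₁, Fin.ext_iff]
  have hj : j₀ ≠ j₁ := by simp [j₀, j₁, Fin.ext_iff]
  let ψ : Fin a × Fin b → ℂ := Pi.single (i₀, j₀) 1 + Pi.single (i₁, j₁) 1
  refine ⟨(2⁻¹ : ℝ) • vecMulVec ψ (star ψ),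
    (posSemidef_vecMulVec_self_star ψ).smul (by norm_num), ?_, ?_⟩
  · simp [ψ, trace_vecMulVec, hi, hi.symm]
    norm_num
  intro hsep
  -- `e₀₁ - e₁₀` is an eigenvector of the partial transpose with eigenvalue `-1/2`
  have hneg := hsep.posSemidef_partialTranspose.dotProduct_mulVec_nonneg
    (Pi.single (i₀, j₁) 1 - Pi.single (i₁, j₀) 1)
  simp [ψ, partialTranspose, vecMulVec_apply, mulVec_sub, Pi.single_apply, hi, hi.symm, hj,
    hj.symm] at hneg
  norm_num [Complex.le_def] at hneg

section Channel
variable {ι : Type*} [Fintype ι] [DecidableEq ι]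

def IsUnitaryConj (Φ : Module.End ℂ (Matrix ι ι ℂ)) : Prop :=
  ∃ U : Matrix ι ι ℂ, U * Uᴴ = 1 ∧ ∀ X, Φ X = U * X * Uᴴ

theorem isUnitaryConj_of_norm_det_eq_one {Φ : Module.End ℂ (Matrix ι ι ℂ)}
    (hcp : (choiMatrix Φ).PosSemidef) (htp : ∀ X, (Φ X).trace = X.trace)
    (hdet : ‖LinearMap.det Φ‖ = 1) : IsUnitaryConj Φ := by
  set C := choiMatrix Φ
  set M := LinearMap.toMatrix (stdBasis ℂ ι ι) (stdBasis ℂ ι ι) Φ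
  have hsq : RCLike.re C.trace ^ 2 ≤ RCLike.re (C * C).trace :=
    calc RCLike.re C.trace ^ 2 = (Fintype.card (ι × ι) : ℝ) := by
          simp [C, trace_choiMatrix htp, Fintype.card_prod, sq]
      _ ≤ RCLike.re (Mᴴ * M).trace :=
          card_le_re_trace_conjTranspose_mul_self (by rwa [LinearMap.det_toMatrix])
      _ = RCLike.re (C * C).trace := by
          rw [← trace_conjTranspose_mul_self_choiMatrix, hcp.1.eq]
  obtain ⟨w, hw⟩ := hcp.exists_eq_vecMulVec_of_sq_trace_le hsq
  set K : Matrix ι ι ℂ := of fun i k => w (i, k)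
  have hΦ : Φ = LinearMap.mulLeftRight ℂ (K, Kᴴ) :=
    choiMatrix_injective (by rw [choiMatrix_mulLeftRight]; exact hw)
  have hK : Kᴴ * K = 1 := conjTranspose_mul_self_eq_one_of_forall_trace_eq fun X => by
    rw [← htp X, hΦ, LinearMap.mulLeftRight_apply]
  exact ⟨K, mul_eq_one_comm.mp hK, fun X => by rw [hΦ, LinearMap.mulLeftRight_apply]⟩

theorem isUnitaryConj_one : IsUnitaryConj (1 : Module.End ℂ (Matrix ι ι ℂ)) :=
  ⟨1, by simp, fun X => by simp⟩

theorem IsUnitaryConj.mul {Φ Ψ : Module.End ℂ (Matrix ι ι ℂ)} (hΦ : IsUnitaryConj Φ)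
    (hΨ : IsUnitaryConj Ψ) : IsUnitaryConj (Φ * Ψ) := by
  obtain ⟨U, hU, hΦU⟩ := hΦ
  obtain ⟨V, hV, hΨV⟩ := hΨ
  refine ⟨U * V, ?_, fun X => ?_⟩
  · rw [conjTranspose_mul, mul_assoc, ← mul_assoc V, hV, one_mul, hU]
  · rw [Module.End.mul_apply, hΦU, hΨV, conjTranspose_mul]
    noncomm_ring

theorem isUnitaryConj_list_prod {L : List (Module.End ℂ (Matrix ι ι ℂ))}
    (hL : ∀ Φ ∈ L, IsUnitaryConj Φ) : IsUnitaryConj L.prod :=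
  List.prod_induction _ (fun _ _ => IsUnitaryConj.mul) isUnitaryConj_one hL

end Channel

theorem IsUnitaryConj.not_isEA {a b : ℕ} (ha : 2 ≤ a) (hb : 2 ≤ b)
    {Φ : Module.End ℂ (Matrix (Fin a × Fin b) (Fin a × Fin b) ℂ)} (hΦ : IsUnitaryConj Φ) :
    ¬ IsEA Φ := by
  obtain ⟨U, hU, hΦU⟩ := hΦ
  obtain ⟨σ, hσ, htr, hent⟩ := exists_not_isSepState ha hb
  intro hEA
  have hsep := hEA (Uᴴ * σ * U) (hσ.conjTranspose_mul_mul_same U)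
    (by rw [trace_mul_cycle, hU, one_mul, htr])
  rw [hΦU, ← mul_assoc, ← mul_assoc, hU, one_mul, mul_assoc, hU, mul_one] at hsep
  exact hent hsep

/-- quantum channels Φ₁,…,Φₙ on a bipartite system with |det Φᵢ| = 1 are
unitary conjugations, hence their composition is a unitary conjugation and is not
entanglement annihilating. -/
theorem stmt10 {a b : ℕ} (ha : 2 ≤ a) (hb : 2 ≤ b) (n : ℕ)
    (Φ : Fin n → Module.End ℂ (Matrix (Fin a × Fin b) (Fin a × Fin b) ℂ))
    (hcp : ∀ i, (choiMatrix (Φ i)).PosSemidef)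
    (htp : ∀ i X, Matrix.trace (Φ i X) = Matrix.trace X)
    (hdet : ∀ i, ‖LinearMap.det (Φ i)‖ = 1) :
    (∀ i, ∃ U : Matrix (Fin a × Fin b) (Fin a × Fin b) ℂ,
        U * Uᴴ = 1 ∧ ∀ X, Φ i X = U * X * Uᴴ) ∧
    (∃ U : Matrix (Fin a × Fin b) (Fin a × Fin b) ℂ,
        U * Uᴴ = 1 ∧ ∀ X, (List.ofFn Φ).prod X = U * X * Uᴴ) ∧
    ¬ IsEA ((List.ofFn Φ).prod) := by
  have hΦ : ∀ i, IsUnitaryConj (Φ i) :=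
    fun i => isUnitaryConj_of_norm_det_eq_one (hcp i) (htp i) (hdet i)
  have hprod : IsUnitaryConj (List.ofFn Φ).prod :=
    isUnitaryConj_list_prod fun _ hf => by
      obtain ⟨i, rfl⟩ := List.mem_ofFn.mp hf
      exact hΦ i
  exact ⟨hΦ, hprod, hprod.not_isEA ha hb⟩
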